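/- Let 𝒜 be a convex body in ℝ^(n+1) = ℝ × ℝⁿ, and for t ∈ ℝ let A_t = {a ∈ ℝⁿ : (t,a) ∈ 𝒜} be the slice at height t. Then t ↦ (vol(A_t))^(1/n) is concave on the interval of t for which A_t is nonempty. -/

import Mathlib

/-!
Slicing reduces concavity of `t ↦ vol(A_t)^(1/n)` to the Brunn–Minkowski inequality
`vol(a A_x + b A_y)^(1/n) ≥ a vol(A_x)^(1/n) + b vol(A_y)^(1/n)`, because convexity of `𝒜`
gives `a A_x + b A_y ⊆ A_(a x + b y)`.

Brunn–Minkowski follows, by rescaling the two sets to equal volume, from its multiplicative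
form `vol((1-λ) K + λ L) ≥ vol(K)^(1-λ) vol(L)^λ`. That form is proved by induction on the
dimension: the slice volumes of `K`, `L`, `(1-λ) K + λ L` over the first coordinate satisfy the
hypothesis of the one-dimensional Prékopa–Leindler inequality, whose integrated conclusion is
the multiplicative inequality one dimension up. Prékopa–Leindler on the line comes from the
one-dimensional inequality `|S + T| ≥ |S| + |T|` applied to superlevel sets, after normalising
both functions to have supremum `1`.
-/

open MeasureTheory Set Pointwise ENNReal NNReal Module

theorem ENNReal.geom_mean_le_arith_mean2_weighted {w₁ w₂ : ℝ} (hw₁ : 0 < w₁) (hw₂ : 0 < w₂)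
    (hw : w₁ + w₂ = 1) (p₁ p₂ : ℝ≥0∞) :
    p₁ ^ w₁ * p₂ ^ w₂ ≤ ENNReal.ofReal w₁ * p₁ + ENNReal.ofReal w₂ * p₂ := by
  rcases eq_or_ne p₁ ⊤ with rfl | hp₁
  · simp [ENNReal.mul_top, hw₁]
  rcases eq_or_ne p₂ ⊤ with rfl | hp₂
  · simp [ENNReal.mul_top, hw₂]
  lift p₁ to ℝ≥0 using hp₁
  lift p₂ to ℝ≥0 using hp₂
  have key := NNReal.geom_mean_le_arith_mean2_weighted w₁.toNNReal w₂.toNNReal p₁ p₂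
    (by rw [← Real.toNNReal_add hw₁.le hw₂.le, hw, Real.toNNReal_one])
  rw [Real.coe_toNNReal _ hw₁.le, Real.coe_toNNReal _ hw₂.le] at key
  rw [← ENNReal.coe_rpow_of_nonneg _ hw₁.le, ← ENNReal.coe_rpow_of_nonneg _ hw₂.le,
    ENNReal.ofReal, ENNReal.ofReal]
  exact_mod_cast key

theorem MeasureTheory.lintegral_ofReal_eq_mul_lintegral_ofReal_mul_inv {α : Type*}
    [MeasurableSpace α] (μ : Measure α) (φ : α → ℝ) {M : ℝ} (hM : 0 < M) :
    ∫⁻ x, ENNReal.ofReal (φ x) ∂μ = ENNReal.ofReal M * ∫⁻ x, ENNReal.ofReal (φ x * M⁻¹) ∂μ := by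
  rw [← lintegral_const_mul' _ _ ofReal_ne_top]
  congr 1 with x
  rw [← ENNReal.ofReal_mul hM.le, mul_comm (φ x), mul_inv_cancel_left₀ hM.ne']

theorem isLUB_range_mul_inv {ι : Type*} {φ : ι → ℝ} {M : ℝ} (hM : 0 < M)
    (hφ : IsLUB (range φ) M) : IsLUB (range fun x => φ x * M⁻¹) 1 := by
  simpa [← range_comp, Function.comp_def, mul_inv_cancel₀ hM.ne'] using
    hφ.mul_right (inv_nonneg.2 hM.le)

theorem MeasureTheory.measure_le_measure_add_left {G : Type*} [AddGroup G] [MeasurableSpace G]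
    [MeasurableAdd G] {μ : Measure G} [μ.IsAddLeftInvariant] {s : Set G} (hs : s.Nonempty)
    (t : Set G) : μ t ≤ μ (s + t) := by
  obtain ⟨x, hx⟩ := hs
  rw [← measure_vadd μ x t]
  exact measure_mono (vadd_set_subset_add hx)

section Slices

variable {𝕜 X Y : Type*}

theorem Set.smul_preimage_prodMk_add_smul_preimage_prodMk_subset [Semiring 𝕜]
    [AddCommMonoid X] [Module 𝕜 X] [AddCommMonoid Y] [Module 𝕜 Y] (s t : Set (X × Y))
    (x y : X) (a b : 𝕜) :
    a • (Prod.mk x ⁻¹' s) + b • (Prod.mk y ⁻¹' t) ⊆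
      Prod.mk (a • x + b • y) ⁻¹' (a • s + b • t) := by
  rintro _ ⟨_, ⟨u, hu, rfl⟩, _, ⟨v, hv, rfl⟩, rfl⟩
  exact ⟨_, smul_mem_smul_set hu, _, smul_mem_smul_set hv, rfl⟩

theorem Set.preimage_prodMk_subset_image_snd (s : Set (X × Y)) (x : X) :
    Prod.mk x ⁻¹' s ⊆ Prod.snd '' s :=
  fun y hy => ⟨(x, y), hy, rfl⟩

variable [TopologicalSpace X] [TopologicalSpace Y] {K : Set (X × Y)}

theorem IsCompact.preimage_prodMk [T2Space X] [T2Space Y] (hK : IsCompact K) (x : X) :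
    IsCompact (Prod.mk x ⁻¹' K) :=
  (hK.image continuous_snd).of_isClosed_subset (hK.isClosed.preimage (.prodMk_right x))
    (preimage_prodMk_subset_image_snd K x)

theorem IsCompact.toReal_measure_preimage_prodMk_le [MeasurableSpace Y] {μ : Measure Y}
    [IsFiniteMeasureOnCompacts μ] (hK : IsCompact K) (x : X) :
    (μ (Prod.mk x ⁻¹' K)).toReal ≤ (μ (Prod.snd '' K)).toReal :=
  toReal_mono (hK.image continuous_snd).measure_lt_top.ne
    (measure_mono (preimage_prodMk_subset_image_snd K x))

theorem IsCompact.measure_preimage_prodMk_lt_top [MeasurableSpace Y] {μ : Measure Y}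
    [IsFiniteMeasureOnCompacts μ] (hK : IsCompact K) (x : X) : μ (Prod.mk x ⁻¹' K) < ⊤ :=
  (measure_mono (preimage_prodMk_subset_image_snd K x)).trans_lt
    (hK.image continuous_snd).measure_lt_top

theorem IsCompact.lintegral_volume_preimage_prodMk [MeasureSpace X] [MeasureSpace Y]
    [T2Space X] [T2Space Y] [OpensMeasurableSpace (X × Y)] [SFinite (volume : Measure Y)]
    [IsFiniteMeasureOnCompacts (volume : Measure Y)]
    (hK : IsCompact K) : ∫⁻ x, ENNReal.ofReal (volume (Prod.mk x ⁻¹' K)).toReal = volume K := by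
  simp_rw [ENNReal.ofReal_toReal (hK.measure_preimage_prodMk_lt_top _).ne]
  rw [Measure.volume_eq_prod, Measure.prod_apply hK.measurableSet]

end Slices

namespace Real

theorem volume_add_volume_le_volume_add_of_isCompact {K L : Set ℝ} (hK : IsCompact K)
    (hL : IsCompact L) (hKne : K.Nonempty) (hLne : L.Nonempty) :
    volume K + volume L ≤ volume (K + L) := by
  set a := sSup K
  set b := sInf L
  have ha : a ∈ K := hK.sSup_mem hKne
  have hb : b ∈ L := hL.sInf_mem hLne
  have hinter : (K + {b}) ∩ ({a} + L) ⊆ {a + b} := by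
    rintro _ ⟨⟨x, hx, _, rfl, rfl⟩, ⟨_, rfl, y, hy, hxy⟩⟩
    have := le_csSup hK.bddAbove hx
    have := csInf_le hL.bddBelow hy
    rw [mem_singleton_iff]
    linarith
  calc volume K + volume L = volume (K + {b}) + volume ({a} + L) := by
        rw [add_singleton, singleton_add, image_add_right, image_add_left,
          measure_preimage_add_right, measure_preimage_add]
    _ = volume ((K + {b}) ∪ ({a} + L)) :=
        (measure_union₀ (isCompact_singleton.add hL).measurableSet.nullMeasurableSet
          (measure_mono_null hinter (measure_singleton _))).symm
    _ ≤ volume (K + L) := measure_mono <| union_subset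
        (add_subset_add_left (singleton_subset_iff.2 hb))
        (add_subset_add_right (singleton_subset_iff.2 ha))

theorem volume_add_volume_le_volume_add {S T : Set ℝ} (hS : MeasurableSet S)
    (hT : MeasurableSet T) (hSne : S.Nonempty) (hTne : T.Nonempty) :
    volume S + volume T ≤ volume (S + T) := by
  obtain ⟨s, hs⟩ := hSne
  obtain ⟨t, ht⟩ := hTne
  rw [hS.measure_eq_iSup_isCompact, hT.measure_eq_iSup_isCompact]
  simp only [iSup_and']
  refine ENNReal.biSup_add_biSup_le' ⟨∅, empty_subset _, isCompact_empty⟩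
    ⟨∅, empty_subset _, isCompact_empty⟩ fun K ⟨hKS, hK⟩ L ⟨hLT, hL⟩ => ?_
  calc volume K + volume L ≤ volume (insert s K) + volume (insert t L) := by
        gcongr <;> exact subset_insert ..
    _ ≤ volume (insert s K + insert t L) :=
        volume_add_volume_le_volume_add_of_isCompact (hK.insert s) (hL.insert t)
          (insert_nonempty ..) (insert_nonempty ..)
    _ ≤ volume (S + T) :=
        measure_mono (add_subset_add (insert_subset hs hKS) (insert_subset ht hLT))

theorem volume_smul_of_nonneg {c : ℝ} (hc : 0 ≤ c) (S : Set ℝ) :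
    volume (c • S) = ENNReal.ofReal c * volume S := by
  simp [Measure.addHaar_smul_of_nonneg volume hc]

variable {l : ℝ} {f g h : ℝ → ℝ}

theorem volume_superlevel_combo_le (hl0 : 0 < l) (hl1 : l < 1) (hf : Measurable f)
    (hg : Measurable g) (hfg : ∀ s t, f s ^ (1 - l) * g t ^ l ≤ h ((1 - l) * s + l * t))
    {r : ℝ} (hr : 0 < r) (hfr : {s | r < f s}.Nonempty)
    (hgr : {t | r < g t}.Nonempty) :
    ENNReal.ofReal (1 - l) * volume {s | r < f s} + ENNReal.ofReal l * volume {t | r < g t}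
      ≤ volume {u | r < h u} := by
  have hsub : (1 - l) • {s | r < f s} + l • {t | r < g t} ⊆ {u | r < h u} := by
    rintro _ ⟨_, ⟨s, hs, rfl⟩, _, ⟨t, ht, rfl⟩, rfl⟩
    calc r = r ^ (1 - l) * r ^ l := by rw [← rpow_add hr, sub_add_cancel, rpow_one]
      _ < f s ^ (1 - l) * g t ^ l := by
          gcongr
          exacts [hs, ht]
      _ ≤ h ((1 - l) * s + l * t) := hfg s t
  rw [← volume_smul_of_nonneg (by linarith), ← volume_smul_of_nonneg hl0.le]
  refine (volume_add_volume_le_volume_add ?_ ?_ ?_ ?_).trans (measure_mono hsub)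
  · exact (measurableSet_lt measurable_const hf).const_smul₀ _
  · exact (measurableSet_lt measurable_const hg).const_smul₀ _
  · exact hfr.smul_set
  · exact hgr.smul_set

theorem prekopa_leindler_of_isLUB_one (hl0 : 0 < l) (hl1 : l < 1) (hf : Measurable f)
    (hg : Measurable g) (hh : Measurable h) (hf0 : ∀ s, 0 ≤ f s) (hg0 : ∀ t, 0 ≤ g t)
    (hf1 : IsLUB (range f) 1) (hg1 : IsLUB (range g) 1)
    (hfg : ∀ s t, f s ^ (1 - l) * g t ^ l ≤ h ((1 - l) * s + l * t)) :
    ENNReal.ofReal (1 - l) * (∫⁻ s, ENNReal.ofReal (f s)) +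
      ENNReal.ofReal l * (∫⁻ t, ENNReal.ofReal (g t)) ≤ ∫⁻ u, ENNReal.ofReal (h u) := by
  have hh0 : ∀ u, 0 ≤ h u := fun u => by
    have := hfg u u
    rw [← add_mul, sub_add_cancel, one_mul] at this
    exact (mul_nonneg (rpow_nonneg (hf0 u) _) (rpow_nonneg (hg0 u) _)).trans this
  have hlevel : ∀ r ∈ Ioi (0 : ℝ), ENNReal.ofReal (1 - l) * volume {s | r < f s} +
      ENNReal.ofReal l * volume {t | r < g t} ≤ volume {u | r < h u} := by
    intro r (hr : 0 < r)
    rcases lt_or_ge r 1 with hr1 | hr1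
    · exact volume_superlevel_combo_le hl0 hl1 hf hg hfg hr
        (by simpa [Set.Nonempty] using (lt_isLUB_iff hf1).1 hr1)
        (by simpa [Set.Nonempty] using (lt_isLUB_iff hg1).1 hr1)
    · have hfr : {s | r < f s} = ∅ :=
        eq_empty_of_forall_notMem fun s hs => (hf1.1 ⟨s, rfl⟩).not_gt (hr1.trans_lt hs)
      have hgr : {t | r < g t} = ∅ :=
        eq_empty_of_forall_notMem fun t ht => (hg1.1 ⟨t, rfl⟩).not_gt (hr1.trans_lt ht)
      simp [hfr, hgr]
  have hmeas : ∀ φ : ℝ → ℝ, Measurable fun r : ℝ => volume {s | r < φ s} := fun φ =>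
    Antitone.measurable fun r r' hrr' => measure_mono fun s hs => hrr'.trans_lt hs
  have layercake : ∀ φ : ℝ → ℝ, Measurable φ → (∀ x, 0 ≤ φ x) →
      ∫⁻ x, ENNReal.ofReal (φ x) = ∫⁻ r in Ioi 0, volume {x | r < φ x} := fun φ hφ hφ0 =>
    lintegral_eq_lintegral_meas_lt _ (ae_of_all _ hφ0) hφ.aemeasurable
  rw [layercake f hf hf0, layercake g hg hg0, layercake h hh hh0,
    ← lintegral_const_mul _ (hmeas f), ← lintegral_const_mul _ (hmeas g),
    ← lintegral_add_left ((hmeas f).const_mul _)]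
  exact setLIntegral_mono' measurableSet_Ioi hlevel

theorem prekopa_leindler (hl0 : 0 < l) (hl1 : l < 1) (hf : Measurable f)
    (hg : Measurable g) (hh : Measurable h) (hf0 : ∀ s, 0 ≤ f s) (hg0 : ∀ t, 0 ≤ g t)
    (hfB : BddAbove (range f)) (hgB : BddAbove (range g))
    (hfg : ∀ s t, f s ^ (1 - l) * g t ^ l ≤ h ((1 - l) * s + l * t)) :
    (∫⁻ s, ENNReal.ofReal (f s)) ^ (1 - l) * (∫⁻ t, ENNReal.ofReal (g t)) ^ l ≤
      ∫⁻ u, ENNReal.ofReal (h u) := by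
  obtain ⟨Mf, hMf⟩ : ∃ M, IsLUB (range f) M := ⟨_, isLUB_csSup (range_nonempty f) hfB⟩
  obtain ⟨Mg, hMg⟩ : ∃ M, IsLUB (range g) M := ⟨_, isLUB_csSup (range_nonempty g) hgB⟩
  rcases ((hf0 0).trans (hMf.1 ⟨0, rfl⟩)).eq_or_lt with rfl | hMf0
  · have : ∀ s, f s = 0 := fun s => (hMf.1 ⟨s, rfl⟩).antisymm (hf0 s)
    simp [this, hl1]
  rcases ((hg0 0).trans (hMg.1 ⟨0, rfl⟩)).eq_or_lt with rfl | hMg0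
  · have : ∀ t, g t = 0 := fun t => (hMg.1 ⟨t, rfl⟩).antisymm (hg0 t)
    simp [this, hl0]
  set C := Mf ^ (1 - l) * Mg ^ l
  have hC : 0 < C := by positivity
  have key := prekopa_leindler_of_isLUB_one hl0 hl1 (hf.mul_const Mf⁻¹) (hg.mul_const Mg⁻¹)
    (hh.mul_const C⁻¹) (fun s => by have := hf0 s; positivity)
    (fun t => by have := hg0 t; positivity) (isLUB_range_mul_inv hMf0 hMf)
    (isLUB_range_mul_inv hMg0 hMg)
    fun s t => by
      rw [mul_rpow (hf0 s) (by positivity), mul_rpow (hg0 t) (by positivity),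
        inv_rpow hMf0.le, inv_rpow hMg0.le, mul_mul_mul_comm, ← mul_inv]
      gcongr
      exact hfg s t
  rw [lintegral_ofReal_eq_mul_lintegral_ofReal_mul_inv _ f hMf0,
    lintegral_ofReal_eq_mul_lintegral_ofReal_mul_inv _ g hMg0,
    lintegral_ofReal_eq_mul_lintegral_ofReal_mul_inv _ h hC]
  calc _ = ENNReal.ofReal C * ((∫⁻ s, ENNReal.ofReal (f s * Mf⁻¹)) ^ (1 - l) *
        (∫⁻ t, ENNReal.ofReal (g t * Mg⁻¹)) ^ l) := by
        rw [ENNReal.mul_rpow_of_nonneg _ _ (by linarith), ENNReal.mul_rpow_of_nonneg _ _ hl0.le,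
          ENNReal.ofReal_mul (by positivity), ENNReal.ofReal_rpow_of_pos hMf0,
          ENNReal.ofReal_rpow_of_pos hMg0]
        ring
    _ ≤ _ := by
        gcongr
        exact (ENNReal.geom_mean_le_arith_mean2_weighted (by linarith) hl0 (by ring) _ _).trans key

end Real

section Multiplicative

variable (E : Type*) [AddCommGroup E] [Module ℝ E] [TopologicalSpace E] [MeasureSpace E]

def MultiplicativeBrunnMinkowski (l : ℝ) : Prop :=
  ∀ K L : Set E, IsCompact K → IsCompact L →
    volume K ^ (1 - l) * volume L ^ l ≤ volume ((1 - l) • K + l • L)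

variable {E}

namespace MultiplicativeBrunnMinkowski

section Prod

variable [ContinuousAdd E] [ContinuousConstSMul ℝ E] [T2Space E] [OpensMeasurableSpace E]
  [SFinite (volume : Measure E)] [IsFiniteMeasureOnCompacts (volume : Measure E)]

theorem prod_real {l : ℝ} (hl0 : 0 < l) (hl1 : l < 1) (hE : MultiplicativeBrunnMinkowski E l) :
    MultiplicativeBrunnMinkowski (ℝ × E) l := by
  intro K L hK hL
  have hC : IsCompact ((1 - l) • K + l • L) := (hK.smul _).add (hL.smul _)
  have measurable_slice : ∀ {S : Set (ℝ × E)}, IsCompact S →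
      Measurable fun s => (volume (Prod.mk s ⁻¹' S)).toReal := fun hS =>
    (measurable_measure_prodMk_left hS.measurableSet).ennreal_toReal
  have bddAbove_slice : ∀ {S : Set (ℝ × E)}, IsCompact S →
      BddAbove (range fun s => (volume (Prod.mk s ⁻¹' S)).toReal) := fun hS =>
    ⟨_, forall_mem_range.2 hS.toReal_measure_preimage_prodMk_le⟩
  rw [← hK.lintegral_volume_preimage_prodMk, ← hL.lintegral_volume_preimage_prodMk,
    ← hC.lintegral_volume_preimage_prodMk]
  refine Real.prekopa_leindler hl0 hl1 (measurable_slice hK) (measurable_slice hL)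
    (measurable_slice hC) (fun _ => toReal_nonneg) (fun _ => toReal_nonneg)
    (bddAbove_slice hK) (bddAbove_slice hL) fun s t => ?_
  rw [ENNReal.toReal_rpow, ENNReal.toReal_rpow, ← ENNReal.toReal_mul]
  exact ENNReal.toReal_mono (hC.measure_preimage_prodMk_lt_top _).ne <|
    (hE _ _ (hK.preimage_prodMk s) (hL.preimage_prodMk t)).trans <| measure_mono <|
      Set.smul_preimage_prodMk_add_smul_preimage_prodMk_subset K L s t (1 - l) l

end Prod

theorem map_continuousLinearEquiv {F : Type*} [AddCommGroup F] [Module ℝ F] [TopologicalSpace F]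
    [ContinuousAdd F] [ContinuousConstSMul ℝ F] [T2Space F] [MeasureSpace F]
    [OpensMeasurableSpace F] {l : ℝ} (e : E ≃L[ℝ] F) (he : MeasurePreserving e)
    (hE : MultiplicativeBrunnMinkowski E l) :
    MultiplicativeBrunnMinkowski F l := by
  intro K L hK hL
  have hvol : ∀ {S : Set F}, MeasurableSet S → volume (e.symm '' S) = volume S := fun hS => by
    rw [e.image_symm_eq_preimage, he.measure_preimage hS.nullMeasurableSet]
  have hC : IsCompact ((1 - l) • K + l • L) := (hK.smul _).add (hL.smul _)
  have := hE _ _ (hK.image e.symm.continuous) (hL.image e.symm.continuous)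
  rwa [← image_smul_set, ← image_smul_set, ← image_add, hvol hK.measurableSet,
    hvol hL.measurableSet, hvol hC.measurableSet] at this

end MultiplicativeBrunnMinkowski

theorem multiplicativeBrunnMinkowski_pi {l : ℝ} (hl0 : 0 < l) (hl1 : l < 1) (n : ℕ) :
    MultiplicativeBrunnMinkowski (Fin n → ℝ) l := by
  induction n with
  | zero =>
    intro K L _ _
    rcases K.eq_empty_or_nonempty with rfl | hK
    · simp [hl1]
    rcases L.eq_empty_or_nonempty with rfl | hL
    · simp [hl0]
    rw [(hK.smul_set.add hL.smul_set).eq_univ, hK.eq_univ, hL.eq_univ]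
    simp [volume_pi]
  | succ n ih =>
    refine (ih.prod_real hl0 hl1).map_continuousLinearEquiv (Fin.consEquivL ℝ fun _ => ℝ) ?_
    have hcons : ⇑(Fin.consEquivL ℝ fun _ : Fin (n + 1) => ℝ) =
        (MeasurableEquiv.piFinSuccAbove (fun _ : Fin (n + 1) => ℝ) 0).symm := by
      ext
      simp
    rw [hcons]
    exact (volume_preserving_piFinSuccAbove _ 0).symm

end Multiplicative

section Additive

variable {E : Type*} [NormedAddCommGroup E] [NormedSpace ℝ E] [MeasureSpace E] [BorelSpace E]
  [FiniteDimensional ℝ E] [(volume : Measure E).IsAddHaarMeasure]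

theorem brunn_minkowski_pow_of_multiplicative
    (hE : ∀ l ∈ Ioo (0 : ℝ) 1, MultiplicativeBrunnMinkowski E l) {K L : Set E} (hK : IsCompact K)
    (hL : IsCompact L) (hKne : K.Nonempty) (hLne : L.Nonempty) {a b α β : ℝ} (ha : 0 ≤ a)
    (hb : 0 ≤ b) (hα : 0 ≤ α) (hβ : 0 ≤ β) (hKα : volume K = ENNReal.ofReal (α ^ finrank ℝ E))
    (hLβ : volume L = ENNReal.ofReal (β ^ finrank ℝ E)) :
    ENNReal.ofReal ((a * α + b * β) ^ finrank ℝ E) ≤ volume (a • K + b • L) := by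
  set n := finrank ℝ E
  rcases (mul_nonneg ha hα).eq_or_lt with haα | haα
  · rw [← haα, zero_add, mul_pow, ENNReal.ofReal_mul (by positivity), ← hLβ,
      ← Measure.addHaar_smul_of_nonneg _ hb]
    exact measure_le_measure_add_left hKne.smul_set _
  rcases (mul_nonneg hb hβ).eq_or_lt with hbβ | hbβ
  · rw [← hbβ, add_zero, mul_pow, ENNReal.ofReal_mul (by positivity), ← hKα,
      ← Measure.addHaar_smul_of_nonneg _ ha, add_comm]
    exact measure_le_measure_add_left hLne.smul_set _
  have hα : 0 < α := pos_of_mul_pos_right haα ha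
  have hβ : 0 < β := pos_of_mul_pos_right hbβ hb
  set c := a * α + b * β
  have hc : 0 < c := by positivity
  -- Rescale `K` and `L` to volume `c ^ n`; the weight `θ` recombines them into `a • K + b • L`.
  set θ := b * β / c
  have hθ : θ ∈ Ioo (0 : ℝ) 1 := ⟨by positivity, (div_lt_one hc).2 (by linarith)⟩
  have hvol : ∀ {S : Set E} {γ : ℝ}, 0 < γ → volume S = ENNReal.ofReal (γ ^ n) →
      volume ((c / γ) • S) = ENNReal.ofReal (c ^ n) := fun hγ hS => by
    rw [Measure.addHaar_smul_of_nonneg _ (by positivity), hS,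
      ← ENNReal.ofReal_mul (by positivity), div_pow, div_mul_cancel₀ _ (by positivity)]
  have key := hE θ hθ _ _ (hK.smul (c / α)) (hL.smul (c / β))
  rwa [hvol hα hKα, hvol hβ hLβ, ← ENNReal.rpow_add _ _ (by simp; positivity) ofReal_ne_top,
    sub_add_cancel, ENNReal.rpow_one, smul_smul, smul_smul,
    show (1 - θ) * (c / α) = a by simp only [θ, c]; field_simp; ring,
    show θ * (c / β) = b by simp only [θ, c]; field_simp] at key

theorem brunn_minkowski_of_multiplicative
    (hE : ∀ l ∈ Ioo (0 : ℝ) 1, MultiplicativeBrunnMinkowski E l) (hn : 0 < finrank ℝ E)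
    {K L : Set E} (hK : IsCompact K) (hL : IsCompact L) (hKne : K.Nonempty) (hLne : L.Nonempty)
    {a b : ℝ} (ha : 0 ≤ a) (hb : 0 ≤ b) :
    a * (volume K).toReal ^ ((1 : ℝ) / finrank ℝ E) +
      b * (volume L).toReal ^ ((1 : ℝ) / finrank ℝ E) ≤
        (volume (a • K + b • L)).toReal ^ ((1 : ℝ) / finrank ℝ E) := by
  simp only [one_div]
  have hpow : ∀ {S : Set E}, IsCompact S →
      volume S = ENNReal.ofReal (((volume S).toReal ^ (finrank ℝ E : ℝ)⁻¹) ^ finrank ℝ E) :=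
    fun hS => by
      rw [Real.rpow_inv_natCast_pow toReal_nonneg hn.ne',
        ENNReal.ofReal_toReal hS.measure_lt_top.ne]
  have key := brunn_minkowski_pow_of_multiplicative hE hK hL hKne hLne ha hb (by positivity)
    (by positivity) (hpow hK) (hpow hL)
  rw [ENNReal.ofReal_le_iff_le_toReal ((hK.smul a).add (hL.smul b)).measure_lt_top.ne] at key
  rw [Real.le_rpow_inv_iff_of_pos (by positivity) toReal_nonneg (by positivity)]
  exact_mod_cast key

end Additive

theorem brunn_minkowski_slices_power_concave_general (n : ℕ) (hn : 0 < n)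
    (𝒜 : Set (ℝ × (Fin n → ℝ)))
    (hc : IsCompact 𝒜) (hconv : Convex ℝ 𝒜) :
    ConcaveOn ℝ {t : ℝ | {a : Fin n → ℝ | (t, a) ∈ 𝒜}.Nonempty}
      (fun t : ℝ => (volume {a : Fin n → ℝ | (t, a) ∈ 𝒜}).toReal ^ ((1:ℝ) / n)) := by
  have hcombo : ∀ {x y a b : ℝ}, 0 ≤ a → 0 ≤ b → a + b = 1 →
      a • (Prod.mk x ⁻¹' 𝒜) + b • (Prod.mk y ⁻¹' 𝒜) ⊆ Prod.mk (a * x + b * y) ⁻¹' 𝒜 :=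
    fun ha hb hab => (smul_preimage_prodMk_add_smul_preimage_prodMk_subset 𝒜 𝒜 _ _ _ _).trans
      (preimage_mono (hconv.set_combo_subset ha hb hab))
  refine ⟨fun x hx y hy a b ha hb hab => (hx.smul_set.add hy.smul_set).mono (hcombo ha hb hab),
    fun x hx y hy a b ha hb hab => ?_⟩
  have hBM := brunn_minkowski_of_multiplicative
    (fun l hl => multiplicativeBrunnMinkowski_pi hl.1 hl.2 n) (by simpa using hn)
    (hc.preimage_prodMk x) (hc.preimage_prodMk y) hx hy ha hb
  rw [finrank_fin_fun] at hBM
  refine hBM.trans (Real.rpow_le_rpow toReal_nonneg ?_ (by positivity))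
  exact toReal_mono (hc.measure_preimage_prodMk_lt_top _).ne (measure_mono (hcombo ha hb hab))

theorem brunn_minkowski_slices_power_concave (n : ℕ) (hn : 0 < n)
    (𝒜 : Set (ℝ × (Fin n → ℝ)))
    (hc : IsCompact 𝒜) (hconv : Convex ℝ 𝒜) (hi : (interior 𝒜).Nonempty) :
    ConcaveOn ℝ {t : ℝ | {a : Fin n → ℝ | (t, a) ∈ 𝒜}.Nonempty}
      (fun t : ℝ => (volume {a : Fin n → ℝ | (t, a) ∈ 𝒜}).toReal ^ ((1:ℝ) / n)) :=
  brunn_minkowski_slices_power_concave_general n hn 𝒜 hc hconv
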